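/- Let α, β, γ, λ, μ be real numbers and let N(α,β,γ,λ,μ) be the 3×3 real matrix whose rows are (α,β,γ), (λα,λβ,λγ), (μα,μβ,μγ). Suppose α ≠ 0 and α² + λβ² + μγ² ≠ 0. If one of the following holds: (1) λ > 0, μ < 0 and α² + λβ² + μγ² < 0; (2) λ < 0, μ > 0, α² + λβ² < 0 and α² + λβ² + μγ² < 0; (3) λ < 0, μ < 0, α² + λβ² > 0 and α² + λβ² + μγ² > 0; then the evolution algebra E_{N(α,β,γ,λ,μ)} is isomorphic to the evolution algebra E₉ whose structure matrix has rows (1,0,0), (−1,0,0), (−1,0,0). -/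

import Mathlib

/-!
Both algebras have rank-one structure matrices: in `E_N` the product is `x * y = B(x, y) • w`
with `B = diag(1, λ, μ)` and `w = (α, β, γ)`, and in `E₉` it is `x * y = B₉(x, y) • e₀` with
`B₉ = diag(1, -1, -1)`. Hence any invertible `G` with `Gᵀ B G = κ B₉` and `G e₀ = κ w` is an
isomorphism `E₉ → E_N`. Writing `p = α² + λβ²` and `s = p + μγ² = B(w, w)`, the vectors `w`,
`(-λβ, α, 0)` and `(-μγα, -μγβ, p)` are `B`-orthogonal with `B`-squares `s`, `λp` and `μps`.
The case hypotheses, together with `α ≠ 0`, give `λps < 0` and `μp < 0`, so these vectors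
rescale to `B`-squares `1/s, -1/s, -1/s`, which gives `G` with `κ = 1/s`.
-/

/-- Evolution algebra multiplication on ℝ³ determined by a structure matrix `A`:
`(x ∗_A y) j = ∑ i, x i * y i * A i j`. -/
def evolMul (A : Matrix (Fin 3) (Fin 3) ℝ) (x y : Fin 3 → ℝ) : Fin 3 → ℝ :=
  fun j => ∑ i, x i * y i * A i j

/-- The evolution algebras with structure matrices `A` and `B` are isomorphic:
there is an ℝ-linear equivalence of ℝ³ intertwining the two multiplications. -/
def EvolIso (A B : Matrix (Fin 3) (Fin 3) ℝ) : Prop :=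
  ∃ f : (Fin 3 → ℝ) ≃ₗ[ℝ] (Fin 3 → ℝ),
    ∀ x y, f (evolMul A x y) = evolMul B (f x) (f y)

open Matrix

theorem EvolIso.symm {A B : Matrix (Fin 3) (Fin 3) ℝ} : EvolIso A B → EvolIso B A := by
  rintro ⟨f, hf⟩
  refine ⟨f.symm, fun x y => f.injective ?_⟩
  rw [hf, LinearEquiv.apply_symm_apply, LinearEquiv.apply_symm_apply, LinearEquiv.apply_symm_apply]

theorem evolMul_vecMulVec (u w x y : Fin 3 → ℝ) :
    evolMul (vecMulVec u w) x y = (x ⬝ᵥ (diagonal u *ᵥ y)) • w := by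
  ext j
  simp only [evolMul, vecMulVec_apply, dotProduct, mulVec_diagonal, Pi.smul_apply, smul_eq_mul,
    Finset.sum_mul]
  exact Finset.sum_congr rfl fun i _ => by ring

section Congruence

variable {n R : Type*} [Fintype n] [CommSemiring R]

theorem mulVec_dotProduct_mulVec_mulVec (G S : Matrix n n R) (x y : n → R) :
    (G *ᵥ x) ⬝ᵥ (S *ᵥ (G *ᵥ y)) = x ⬝ᵥ ((Gᵀ * S * G) *ᵥ y) := by
  rw [← mulVec_mulVec, ← mulVec_mulVec, dotProduct_mulVec x, vecMul_transpose]

theorem transpose_mul_diagonal_mul [DecidableEq n] (H S : Matrix n n R) (d : n → R) :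
    (H * diagonal d)ᵀ * S * (H * diagonal d) = diagonal d * (Hᵀ * S * H) * diagonal d := by
  simp only [transpose_mul, diagonal_transpose, Matrix.mul_assoc]

end Congruence

theorem evolIso_vecMulVec_of_congruence {u w u' w' : Fin 3 → ℝ} {κ : ℝ}
    (G : Matrix (Fin 3) (Fin 3) ℝ) (hκ : κ ≠ 0) (hu' : ∀ i, u' i ≠ 0)
    (hG : Gᵀ * diagonal u * G = κ • diagonal u') (hw : G *ᵥ w' = κ • w) :
    EvolIso (vecMulVec u' w') (vecMulVec u w) := by
  have hdet : IsUnit G.det := by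
    have hdet_congr := congrArg det hG
    rw [det_mul, det_mul, det_transpose, det_smul, det_diagonal, det_diagonal] at hdet_congr
    refine isUnit_iff_ne_zero.2 fun h => ?_
    rw [h, zero_mul, zero_mul] at hdet_congr
    exact mul_ne_zero (pow_ne_zero _ hκ) (Finset.prod_ne_zero_iff.2 fun i _ => hu' i)
      hdet_congr.symm
  refine ⟨G.toLinearEquiv' (G.invertibleOfIsUnitDet hdet), fun x y => ?_⟩
  change G *ᵥ _ = evolMul _ (G *ᵥ x) (G *ᵥ y)
  rw [evolMul_vecMulVec, evolMul_vecMulVec, mulVec_smul, hw, smul_smul,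
    mulVec_dotProduct_mulVec_mulVec, hG, smul_mulVec, dotProduct_smul, smul_eq_mul, mul_comm]

theorem rankOne_eq_vecMulVec (a b c l m : ℝ) :
    !![a, b, c; l * a, l * b, l * c; m * a, m * b, m * c] = vecMulVec ![1, l, m] ![a, b, c] := by
  ext i j
  fin_cases i <;> fin_cases j <;> simp [vecMulVec]

def orthogonalFrame (a b c l m : ℝ) : Matrix (Fin 3) (Fin 3) ℝ :=
  !![a, -(l * b), -(m * c * a); b, a, -(m * c * b); c, 0, a ^ 2 + l * b ^ 2]

theorem orthogonalFrame_gram (a b c l m : ℝ) :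
    (orthogonalFrame a b c l m)ᵀ * diagonal ![1, l, m] * orthogonalFrame a b c l m =
      diagonal ![a ^ 2 + l * b ^ 2 + m * c ^ 2, l * (a ^ 2 + l * b ^ 2),
        m * (a ^ 2 + l * b ^ 2) * (a ^ 2 + l * b ^ 2 + m * c ^ 2)] := by
  ext i j
  fin_cases i <;> fin_cases j <;> simp [orthogonalFrame, mul_apply, Fin.sum_univ_three] <;> ring

theorem orthogonalFrame_mulVec (a b c l m : ℝ) :
    orthogonalFrame a b c l m *ᵥ ![1, 0, 0] = ![a, b, c] := by
  ext i
  fin_cases i <;> simp [orthogonalFrame, mulVec, dotProduct, Fin.sum_univ_three]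

theorem signature_conditions {a b c l m : ℝ} (ha : a ≠ 0)
    (hcond : (l > 0 ∧ m < 0 ∧ a ^ 2 + l * b ^ 2 + m * c ^ 2 < 0) ∨
             (l < 0 ∧ m > 0 ∧ a ^ 2 + l * b ^ 2 < 0 ∧ a ^ 2 + l * b ^ 2 + m * c ^ 2 < 0) ∨
             (l < 0 ∧ m < 0 ∧ a ^ 2 + l * b ^ 2 > 0 ∧ a ^ 2 + l * b ^ 2 + m * c ^ 2 > 0)) :
    0 < -(l * (a ^ 2 + l * b ^ 2) * (a ^ 2 + l * b ^ 2 + m * c ^ 2)) ∧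
      0 < -(m * (a ^ 2 + l * b ^ 2)) := by
  rcases hcond with ⟨hl, hm, hs⟩ | ⟨hl, hm, hp, hs⟩ | ⟨hl, hm, hp, hs⟩
  · have hp : 0 < a ^ 2 + l * b ^ 2 := by positivity
    exact ⟨by nlinarith [mul_pos hl hp], by nlinarith⟩
  · exact ⟨by nlinarith [mul_pos_of_neg_of_neg hl hp], by nlinarith⟩
  · exact ⟨by nlinarith [mul_neg_of_neg_of_pos hl hp], by nlinarith⟩

theorem stmt_general (a b c l m : ℝ)
    (ha : a ≠ 0)
    (hcond : (l > 0 ∧ m < 0 ∧ a ^ 2 + l * b ^ 2 + m * c ^ 2 < 0) ∨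
             (l < 0 ∧ m > 0 ∧ a ^ 2 + l * b ^ 2 < 0 ∧ a ^ 2 + l * b ^ 2 + m * c ^ 2 < 0) ∨
             (l < 0 ∧ m < 0 ∧ a ^ 2 + l * b ^ 2 > 0 ∧ a ^ 2 + l * b ^ 2 + m * c ^ 2 > 0)) :
    EvolIso (!![a, b, c; l * a, l * b, l * c; m * a, m * b, m * c] : Matrix (Fin 3) (Fin 3) ℝ) (!![1, 0, 0; -1, 0, 0; -1, 0, 0] : Matrix (Fin 3) (Fin 3) ℝ) := by
  obtain ⟨hlps, hmp⟩ := signature_conditions ha hcond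
  set p := a ^ 2 + l * b ^ 2 with hp
  set s := p + m * c ^ 2 with hs
  have hs₀ : s ≠ 0 := by rintro h; simp [h] at hlps
  have hE₉ : !![1, 0, 0; -1, 0, 0; -1, 0, 0] = vecMulVec ![1, -1, -1] ![(1 : ℝ), 0, 0] := by
    simpa using rankOne_eq_vecMulVec 1 0 0 (-1) (-1)
  rw [rankOne_eq_vecMulVec, hE₉]
  set d : Fin 3 → ℝ := ![1 / s, 1 / √(-(l * p * s)), 1 / (√(-(m * p)) * s)]
  refine (evolIso_vecMulVec_of_congruence (orthogonalFrame a b c l m * diagonal d)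
    (one_div_ne_zero hs₀) (by simp [Fin.forall_fin_succ]) ?_ ?_).symm
  · rw [transpose_mul_diagonal_mul, orthogonalFrame_gram, ← hp, ← hs, diagonal_mul_diagonal,
      diagonal_mul_diagonal, ← diagonal_smul]
    congr 1
    ext i
    have hr₂ := (Real.sqrt_pos.2 hlps).ne'
    have hr₃ := (Real.sqrt_pos.2 hmp).ne'
    fin_cases i <;> simp [d] <;> field_simp
    · linear_combination Real.sq_sqrt hlps.le
    · linear_combination Real.sq_sqrt hmp.le
  · have hd : diagonal d *ᵥ ![1, 0, 0] = (1 / s) • ![1, 0, 0] := by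
      ext i; fin_cases i <;> simp [d, mulVec_diagonal]
    rw [← mulVec_mulVec, hd, mulVec_smul, orthogonalFrame_mulVec]

theorem stmt (a b c l m : ℝ)
    (ha : a ≠ 0) (hq : a ^ 2 + l * b ^ 2 + m * c ^ 2 ≠ 0)
    (hcond : (l > 0 ∧ m < 0 ∧ a ^ 2 + l * b ^ 2 + m * c ^ 2 < 0) ∨
             (l < 0 ∧ m > 0 ∧ a ^ 2 + l * b ^ 2 < 0 ∧ a ^ 2 + l * b ^ 2 + m * c ^ 2 < 0) ∨
             (l < 0 ∧ m < 0 ∧ a ^ 2 + l * b ^ 2 > 0 ∧ a ^ 2 + l * b ^ 2 + m * c ^ 2 > 0)) :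
    EvolIso (!![a, b, c; l * a, l * b, l * c; m * a, m * b, m * c] : Matrix (Fin 3) (Fin 3) ℝ) (!![1, 0, 0; -1, 0, 0; -1, 0, 0] : Matrix (Fin 3) (Fin 3) ℝ) :=
  stmt_general a b c l m ha hcond
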